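/- arXiv:1805.08612 — 6 statements merged into one kernel-verified Lean document; each statement's English description precedes it below -/
import Mathlib

section
/- Let r_1,...,r_k be positive reals with r_i ≤ 2^{(i+1-k)/2} r for all i = 1,...,k, where r > 0. Then Σ_{i=1}^k (k+1-i) r_i ≤ γ · r, where γ = 2 Σ_{j≥1} j 2^{-j/2}. -/
/-! Writing `j = k + 1 - i`, the hypothesis gives `(k + 1 - i) rᵢ ≤ j 2^{(2 - j)/2} r = 2 j 2^{-j/2} r`,
so the weighted sum is at most `2 r ∑_{j=1}^k j 2^{-j/2}`, a partial sum of the convergent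
series defining `γ / 2`. -/

open Finset

lemma summable_natCast_mul_rpow_neg_div {b c : ℝ} (hb : 1 < b) (hc : 0 < c) :
    Summable fun j : ℕ => (j : ℝ) * b ^ (-(j : ℝ) / c) := by
  have hgeom : ∀ j : ℕ, (j : ℝ) * b ^ (-(j : ℝ) / c) = (j : ℝ) ^ 1 * (b ^ (-1 / c)) ^ j := by
    intro j
    rw [pow_one, ← Real.rpow_natCast (b ^ _) j, ← Real.rpow_mul (by linarith)]
    ring_nf
  simp_rw [hgeom]
  apply summable_pow_mul_geometric_of_norm_lt_one
  rw [Real.norm_of_nonneg (by positivity)]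
  exact Real.rpow_lt_one_of_one_lt_of_neg hb (div_neg_of_neg_of_pos (by norm_num) hc)

lemma sum_Icc_one_reflect {M : Type*} [AddCommMonoid M] (f : ℕ → M) (k : ℕ) :
    ∑ i ∈ Icc 1 k, f (k + 1 - i) = ∑ i ∈ Icc 1 k, f i := by
  refine sum_nbij' (fun i => k + 1 - i) (fun i => k + 1 - i) ?_ ?_ ?_ ?_ fun _ _ => rfl <;>
    simp only [mem_Icc] <;> omega

lemma sub_mul_le_of_le_two_rpow {k i : ℕ} (hik : i ≤ k) {x r : ℝ}
    (hx : x ≤ (2 : ℝ) ^ (((i : ℝ) + 1 - k) / 2) * r) :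
    ((k : ℝ) + 1 - i) * x ≤
      2 * (((k + 1 - i : ℕ) : ℝ) * (2 : ℝ) ^ (-((k + 1 - i : ℕ) : ℝ) / 2)) * r := by
  have hj : ((k + 1 - i : ℕ) : ℝ) = (k : ℝ) + 1 - i := by
    rw [Nat.cast_sub (by omega)]
    push_cast
    ring
  have hexp : ((i : ℝ) + 1 - k) / 2 = 1 + -((k : ℝ) + 1 - i) / 2 := by ring
  have hweight : 0 ≤ (k : ℝ) + 1 - i := by
    rw [← hj]
    positivity
  calc ((k : ℝ) + 1 - i) * x ≤ ((k : ℝ) + 1 - i) * ((2 : ℝ) ^ (((i : ℝ) + 1 - k) / 2) * r) :=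
        mul_le_mul_of_nonneg_left hx hweight
    _ = _ := by
        rw [hj, hexp, Real.rpow_add two_pos, Real.rpow_one]
        ring

theorem starting_sequence_cost_general (k : ℕ) (r : ℝ) (hr : 0 < r)
    (rs : ℕ → ℝ)
    (hbd : ∀ i, 1 ≤ i → i ≤ k →
      rs i ≤ (2 : ℝ) ^ (((i : ℝ) + 1 - (k : ℝ)) / 2) * r) :
    ∑ i ∈ Finset.Icc 1 k, ((k : ℝ) + 1 - (i : ℝ)) * rs i ≤
      (2 * ∑' j : ℕ, (j : ℝ) * (2 : ℝ) ^ (-(j : ℝ) / 2)) * r := by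
  set f : ℕ → ℝ := fun j => (j : ℝ) * (2 : ℝ) ^ (-(j : ℝ) / 2)
  have hf : Summable f := summable_natCast_mul_rpow_neg_div one_lt_two two_pos
  calc ∑ i ∈ Icc 1 k, ((k : ℝ) + 1 - i) * rs i
      ≤ ∑ i ∈ Icc 1 k, 2 * f (k + 1 - i) * r := by
        refine sum_le_sum fun i hi => ?_
        rw [mem_Icc] at hi
        exact sub_mul_le_of_le_two_rpow hi.2 (hbd i hi.1 hi.2)
    _ = 2 * (∑ j ∈ Icc 1 k, f j) * r := by
        rw [← sum_mul, ← mul_sum, sum_Icc_one_reflect f k]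
    _ ≤ (2 * ∑' j, f j) * r := by
        gcongr
        exact hf.sum_le_tsum _ fun j _ => by positivity

theorem starting_sequence_cost (k : ℕ) (hk : 1 ≤ k) (r : ℝ) (hr : 0 < r)
    (rs : ℕ → ℝ)
    (hpos : ∀ i, 1 ≤ i → i ≤ k → 0 < rs i)
    (hbd : ∀ i, 1 ≤ i → i ≤ k →
      rs i ≤ (2 : ℝ) ^ (((i : ℝ) + 1 - (k : ℝ)) / 2) * r) :
    ∑ i ∈ Finset.Icc 1 k, ((k : ℝ) + 1 - (i : ℝ)) * rs i ≤
      (2 * ∑' j : ℕ, (j : ℝ) * (2 : ℝ) ^ (-(j : ℝ) / 2)) * r :=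
  starting_sequence_cost_general k r hr rs hbd
end

section
/- Define the merge-cost recurrence u_1 = ... = u_6 = 0, u_{2k} = u_k + u_{k-2} + 3k for k ≥ 4, and u_{2k+1} = u_k + u_{k-1} + 3k+2 for k ≥ 3. Then u_n ≥ (3/2) n log₂(n) - 7(n+4) for all n ≥ 1. -/
/-!
The function `Φ x = 3/2 (x+2) log₂ (x+2) - 6 (x+2) + 3` is nonpositive on `[1, 6]` and satisfies
both recurrences with `≤` in place of `=`: after the shift by `2`, the children `k, k - 2` (resp.
`k, k - 1`) of `2k` (resp. `2k + 1`) have shifted sizes adding up to the shifted size of the parent,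
and the recurrences then reduce to `(a+b) log₂ (a+b) ≤ a log₂ a + b log₂ b + (a+b)`, the midpoint
convexity of `t log t`. Strong induction gives `Φ n ≤ u n`, and `Φ n` dominates the claimed bound.
-/

open Real

lemma add_mul_logb_add_le {a b : ℝ} (ha : 0 ≤ a) (hb : 0 ≤ b) :
    (a + b) * logb 2 (a + b) ≤ a * logb 2 a + b * logb 2 b + (a + b) := by
  have hmid := convexOn_mul_log.2 (Set.mem_Ici.mpr ha) (Set.mem_Ici.mpr hb)
    (by norm_num : (0 : ℝ) ≤ 1 / 2) (by norm_num : (0 : ℝ) ≤ 1 / 2) (by norm_num)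
  simp only [smul_eq_mul] at hmid
  have hsplit : (a + b) * log ((a + b) / 2) = (a + b) * log (a + b) - (a + b) * log 2 := by
    rcases (add_nonneg ha hb).eq_or_lt with h | h
    · simp [← h]
    · rw [log_div h.ne' two_ne_zero]; ring
  have hlog : (a + b) * log (a + b) ≤ a * log a + b * log b + (a + b) * log 2 := by
    rw [show 1 / 2 * a + 1 / 2 * b = (a + b) / 2 by ring] at hmid
    nlinarith
  have hlog2 : 0 < log 2 := log_pos one_lt_two
  simp only [logb, ← mul_div_assoc]
  calc (a + b) * log (a + b) / log 2
      ≤ (a * log a + b * log b + (a + b) * log 2) / log 2 := by gcongr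
    _ = a * log a / log 2 + b * log b / log 2 + (a + b) := by field_simp

theorem le_of_mergeRecurrence {u φ : ℕ → ℝ}
    (hbase : ∀ n, 1 ≤ n → n ≤ 6 → φ n ≤ u n)
    (hφeven : ∀ k, 4 ≤ k → φ (2 * k) ≤ φ k + φ (k - 2) + 3 * k)
    (hφodd : ∀ k, 3 ≤ k → φ (2 * k + 1) ≤ φ k + φ (k - 1) + 3 * k + 2)
    (heven : ∀ k, 4 ≤ k → u k + u (k - 2) + 3 * k ≤ u (2 * k))
    (hodd : ∀ k, 3 ≤ k → u k + u (k - 1) + 3 * k + 2 ≤ u (2 * k + 1)) :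
    ∀ n, 1 ≤ n → φ n ≤ u n := by
  intro n
  induction n using Nat.strong_induction_on with
  | _ n ih =>
    intro hn
    by_cases hsmall : n ≤ 6
    · exact hbase n hn hsmall
    obtain ⟨k, rfl | rfl⟩ := Nat.even_or_odd' n
    · have := ih k (by omega) (by omega)
      have := ih (k - 2) (by omega) (by omega)
      linarith [hφeven k (by omega), heven k (by omega)]
    · have := ih k (by omega) (by omega)
      have := ih (k - 1) (by omega) (by omega)
      linarith [hφodd k (by omega), hodd k (by omega)]

noncomputable def mergeCostMinorant (x : ℝ) : ℝ :=
  3 / 2 * (x + 2) * logb 2 (x + 2) - 6 * (x + 2) + 3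

lemma mergeCostMinorant_two_mul_le {x : ℝ} (hx : 0 ≤ x) :
    mergeCostMinorant (2 * x) ≤ mergeCostMinorant x + mergeCostMinorant (x - 2) + 3 * x := by
  have h := add_mul_logb_add_le hx (by linarith : 0 ≤ x + 2)
  rw [show x + (x + 2) = 2 * x + 2 by ring] at h
  unfold mergeCostMinorant
  rw [sub_add_cancel]
  linarith

lemma mergeCostMinorant_two_mul_add_one_le {x : ℝ} (hx : -1 ≤ x) :
    mergeCostMinorant (2 * x + 1) ≤
      mergeCostMinorant x + mergeCostMinorant (x - 1) + 3 * x + 2 := by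
  have h := add_mul_logb_add_le (by linarith : 0 ≤ x + 1) (by linarith : 0 ≤ x + 2)
  rw [show x + 1 + (x + 2) = 2 * x + 1 + 2 by ring] at h
  unfold mergeCostMinorant
  rw [show x - 1 + 2 = x + 1 by ring]
  linarith

lemma mergeCostMinorant_nonpos {x : ℝ} (hx₀ : 0 ≤ x) (hx₆ : x ≤ 6) : mergeCostMinorant x ≤ 0 := by
  have hlog : logb 2 (x + 2) ≤ 3 := by
    rw [logb_le_iff_le_rpow one_lt_two (by linarith)]
    norm_num
    linarith
  unfold mergeCostMinorant
  nlinarith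

lemma mul_logb_sub_le_mergeCostMinorant {x : ℝ} (hx : 1 ≤ x) :
    3 / 2 * x * logb 2 x - 7 * (x + 4) ≤ mergeCostMinorant x := by
  have hmono : x * logb 2 x ≤ (x + 2) * logb 2 (x + 2) :=
    mul_le_mul (by linarith) (logb_le_logb_of_le one_lt_two (by linarith) (by linarith))
      (logb_nonneg one_lt_two hx) (by linarith)
  unfold mergeCostMinorant
  linarith

theorem timsort_adversarial_lower_bound (u : ℕ → ℝ)
    (h0 : ∀ n, 1 ≤ n → n ≤ 6 → u n = 0)
    (heven : ∀ k, 4 ≤ k → u (2 * k) = u k + u (k - 2) + 3 * k)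
    (hodd : ∀ k, 3 ≤ k → u (2 * k + 1) = u k + u (k - 1) + 3 * k + 2) :
    ∀ n : ℕ, 1 ≤ n →
      u n ≥ 3 / 2 * (n : ℝ) * Real.logb 2 n - 7 * ((n : ℝ) + 4) := by
  have hminorant : ∀ n : ℕ, 1 ≤ n → mergeCostMinorant n ≤ u n := by
    refine le_of_mergeRecurrence (fun n _ hn => ?_) (fun k hk => ?_) (fun k hk => ?_)
      (fun k hk => (heven k hk).ge) (fun k hk => (hodd k hk).ge)
    · rw [h0 n ‹_› hn]
      exact mergeCostMinorant_nonpos n.cast_nonneg (by exact_mod_cast hn)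
    · rw [Nat.cast_sub (by omega), Nat.cast_mul, Nat.cast_two]
      exact mergeCostMinorant_two_mul_le k.cast_nonneg
    · rw [Nat.cast_sub (by omega), Nat.cast_add, Nat.cast_mul, Nat.cast_two, Nat.cast_one]
      exact mergeCostMinorant_two_mul_add_one_le (by linarith [k.cast_nonneg (α := ℝ)])
  intro n hn
  exact (mul_logb_sub_le_mergeCostMinorant (by exact_mod_cast hn)).trans (hminorant n hn)
end

section
/- Let H be the binary entropy function and define F(y) = (3/2)(y H(2 - 1/y) + H(y)) - (1+y). Then F(y) ≥ 0 for all y with 1/2 ≤ y ≤ (1+φ²)/(1+2φ²), where φ = (1+√5)/2. -/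
/-!
With `a = 2y - 1`, the quantity `y H(2 - 1/y) + H(y)` collapses to `H(a) + 2(1 - y)`, so that
`F(y) = (3/2) H(a) - 2a`. By concavity of `H`, it lies above its chord from `(0, 0)` to `(1/2, 1)`,
i.e. `H(a) ≥ 2a` on `[0, 1/2]`; hence `F(y) ≥ a ≥ 0` as long as `y ≤ 3/4`, which the golden-ratio
bound guarantees. We work with Mathlib's natural-log `binEntropy`, which is `H · log 2`.
-/

open Real

lemma mul_binEntropy_two_sub_one_div_add {y : ℝ} (hy : y ≠ 0) :
    y * binEntropy (2 - 1 / y) + binEntropy y = binEntropy (2 * y - 1) + 2 * (1 - y) * log 2 := by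
  have h₁ : 2 - 1 / y = (2 * y - 1) * y⁻¹ := by field_simp
  have h₂ : 1 - (2 - 1 / y) = (1 - y) * y⁻¹ := by field_simp; ring
  have h₃ : 1 - (2 * y - 1) = (1 - y) * 2 := by ring
  simp only [binEntropy_eq_negMulLog_add_negMulLog_one_sub, h₂, h₃]
  rw [h₁, negMulLog_mul, negMulLog_mul, negMulLog_mul]
  simp only [negMulLog, log_inv]
  field_simp
  ring

lemma two_mul_mul_log_two_le_binEntropy {p : ℝ} (hp₀ : 0 ≤ p) (hp : p ≤ 2⁻¹) :
    2 * p * log 2 ≤ binEntropy p := by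
  have h := strictConcave_binEntropy.concaveOn.2 (Set.left_mem_Icc.2 zero_le_one)
    (show (2⁻¹ : ℝ) ∈ Set.Icc 0 1 by norm_num) (by linarith : 0 ≤ 1 - 2 * p)
    (by linarith : 0 ≤ 2 * p) (by ring)
  simp only [smul_eq_mul, mul_zero, zero_add, binEntropy_zero, binEntropy_two_inv] at h
  rwa [show 2 * p * 2⁻¹ = p by ring] at h

lemma binEntropy_div_log_two (t : ℝ) :
    binEntropy t / log 2 = -t * logb 2 t - (1 - t) * logb 2 (1 - t) := by
  simp only [binEntropy, logb, log_inv]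
  ring

lemma one_add_goldenRatio_sq_div_lt : (1 + goldenRatio ^ 2) / (1 + 2 * goldenRatio ^ 2) < 3 / 4 := by
  have := one_lt_goldenRatio
  rw [div_lt_iff₀ (by positivity)]
  nlinarith

theorem F_nonneg (φ : ℝ) (hφ : φ = (1 + Real.sqrt 5) / 2)
    (H : ℝ → ℝ)
    (hH : ∀ t, H t = -t * Real.logb 2 t - (1 - t) * Real.logb 2 (1 - t))
    (y : ℝ) (h1 : 1 / 2 ≤ y) (h2 : y ≤ (1 + φ ^ 2) / (1 + 2 * φ ^ 2)) :
    0 ≤ 3 / 2 * (y * H (2 - 1 / y) + H y) - (1 + y) := by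
  have hH' : ∀ t, H t = binEntropy t / log 2 := fun t => by rw [hH, binEntropy_div_log_two]
  have hy : y < 3 / 4 := h2.trans_lt (hφ ▸ one_add_goldenRatio_sq_div_lt)
  have hlog2 : 0 < log 2 := log_pos one_lt_two
  have hF : 3 / 2 * (y * H (2 - 1 / y) + H y) - (1 + y)
      = (3 / 2 * binEntropy (2 * y - 1) - 2 * (2 * y - 1) * log 2) / log 2 := by
    have hshift := mul_binEntropy_two_sub_one_div_add (y := y) (by linarith)
    rw [hH', hH', eq_div_iff hlog2.ne']
    -- otherwise `field_simp` rewrites the argument `2 - 1 / y` and `hshift` no longer matches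
    generalize binEntropy (2 - 1 / y) = B at hshift ⊢
    field_simp
    linear_combination 3 * hshift
  have hchord := two_mul_mul_log_two_le_binEntropy (p := 2 * y - 1) (by linarith) (by linarith)
  rw [hF]
  exact div_nonneg (by nlinarith) hlog2.le
end

section
/- Let φ = (1+√5)/2. Suppose positive reals r_2,...,r_h satisfy r_2 + ... + r_{i-1} < φ r_i for all 3 ≤ i ≤ h, together with r_{i-2} + r_{i-1} < r_i for all 5 ≤ i ≤ h, r_2 < r_3, and r_2 + r_3 < r_4. Then for any new value r_1 with r_1 < r_2 and r_1 + r_2 < r_3, the shifted sequence (r_1, r_2,..., r_h) again satisfies r_1 + ... + r_{i-1} < φ r_i for all 3 ≤ i ≤ h+1 when reindexed. -/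
/-!
The pushed sequence grows at least like the Fibonacci numbers: `r (i-2) + r (i-1) < r i` for
every `i ≥ 3`. This alone keeps each partial sum below `φ` times the next term, by induction in
steps of two: when `r (i-1) ≤ φ⁻¹ r i` the previous bound gives a sum below
`(φ + 1) r (i-1) = φ² r (i-1) ≤ φ r i`; otherwise `r (i-2) < (1 - φ⁻¹) r i = φ⁻² r i`, and the
bound two steps back closes the gap.
-/

open Finset Real

theorem sum_Icc_one_eq_sum_range_succ {M : Type*} [AddCommMonoid M] (f : ℕ → M) (n : ℕ) :
    ∑ j ∈ Icc 1 n, f j = ∑ j ∈ range n, f (j + 1) := by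
  rw [range_eq_Ico, sum_Ico_add', zero_add, Ico_add_one_right_eq_Icc]

theorem add_add_lt_mul_of_sq_eq_add_one {K : Type*} [Field K] [LinearOrder K]
    [IsStrictOrderedRing K] {φ s x y z : K} (hsq : φ ^ 2 = φ + 1) (hφ : 0 < φ)
    (hx : s < φ * x) (hy : s + x < φ * y) (hxyz : x + y < z) :
    s + x + y < φ * z := by
  rcases le_or_gt (φ * y) z with hyz | hyz
  · calc s + x + y < φ * y + y := by linarith
      _ = φ * (φ * y) := by linear_combination -y * hsq
      _ ≤ φ * z := by gcongr
  · calc s + x + y < φ * x + x + y := by linarith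
      _ = φ ^ 2 * x + y := by linear_combination -x * hsq
      _ < φ ^ 2 * (z - y) + y := by gcongr; linarith
      _ = φ * z + (z - φ * y) := by linear_combination (z - y) * hsq
      _ < φ * z := by linarith

theorem sum_range_lt_goldenRatio_mul {a : ℕ → ℝ} {N : ℕ} (h0 : 0 < a 0) (h01 : a 0 < a 1)
    (hfib : ∀ n, n + 2 ≤ N → a n + a (n + 1) < a (n + 2)) :
    ∀ n ≤ N, ∑ j ∈ range n, a j < goldenRatio * a n := by
  intro n
  induction n using Nat.twoStepInduction with
  | zero => intro _; simpa using mul_pos goldenRatio_pos h0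
  | one =>
    intro _
    simpa using h01.trans_le (le_mul_of_one_le_left (h0.trans h01).le one_lt_goldenRatio.le)
  | more n ih ih' =>
    intro hn
    rw [sum_range_succ, sum_range_succ]
    exact add_add_lt_mul_of_sq_eq_add_one goldenRatio_sq goldenRatio_pos (ih (by omega))
      (sum_range_succ a n ▸ ih' (by omega)) (hfib n hn)

theorem push_preserves_phi_invariant_general (φ : ℝ) (hφ : φ = (1 + Real.sqrt 5) / 2)
    (h : ℕ) (r : ℕ → ℝ)
    (hpos : ∀ i, 1 ≤ i → i ≤ h → 0 < r i)
    (hfib : ∀ i, 5 ≤ i → i ≤ h → r (i - 2) + r (i - 1) < r i)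
    (h234 : r 2 + r 3 < r 4)
    (h12 : r 1 < r 2) (h123 : r 1 + r 2 < r 3) :
    ∀ i, 2 ≤ i → i ≤ h → ∑ j ∈ Finset.Icc 1 (i - 1), r j < φ * r i := by
  intro i hi hih
  have hgrowth : ∀ n, n + 2 ≤ h - 1 → r (n + 1) + r (n + 2) < r (n + 3) := by
    intro n hn
    match n with
    | 0 => exact h123
    | 1 => exact h234
    | n + 2 => simpa using hfib (n + 5) (by omega) (by omega)
  have hsum := sum_range_lt_goldenRatio_mul (a := fun j ↦ r (j + 1)) (hpos 1 le_rfl (by omega))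
    h12 hgrowth (i - 1) (by omega)
  rw [Nat.sub_add_cancel (by omega)] at hsum
  rwa [sum_Icc_one_eq_sum_range_succ, hφ]

theorem push_preserves_phi_invariant (φ : ℝ) (hφ : φ = (1 + Real.sqrt 5) / 2)
    (h : ℕ) (r : ℕ → ℝ)
    (hpos : ∀ i, 1 ≤ i → i ≤ h → 0 < r i)
    (hinv : ∀ i, 3 ≤ i → i ≤ h → ∑ j ∈ Finset.Icc 2 (i - 1), r j < φ * r i)
    (hfib : ∀ i, 5 ≤ i → i ≤ h → r (i - 2) + r (i - 1) < r i)
    (h23 : r 2 < r 3) (h234 : r 2 + r 3 < r 4)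
    (h12 : r 1 < r 2) (h123 : r 1 + r 2 < r 3) :
    ∀ i, 2 ≤ i → i ≤ h → ∑ j ∈ Finset.Icc 1 (i - 1), r j < φ * r i :=
  push_preserves_phi_invariant_general φ hφ h r hpos hfib h234 h12 h123
end

section
/- For positive reals r ≥ r' > 0, with potential pot(m) = (3/2) m log₂ m, the potential increase of merging satisfies pot(r+r') - pot(r) - pot(r') ≥ r' , i.e., r log₂((r+r')/r) + r' log₂((r+r')/r') ≥ r' (up to the factor 3/2 it even exceeds r'), and hence the merge cost r + r' is at most the potential increase plus r. -/
open Real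

lemma mul_logb_add_sub_mul_logb_sub_mul_logb {c a b : ℝ} (ha : a ≠ 0) (hb : b ≠ 0)
    (hab : a + b ≠ 0) :
    (a + b) * logb c (a + b) - a * logb c a - b * logb c b =
      a * logb c ((a + b) / a) + b * logb c ((a + b) / b) := by
  rw [logb_div hab ha, logb_div hab hb]
  ring

lemma mul_logb_two_add_div_self_nonneg {a b : ℝ} (ha : 0 < a) (hb : 0 ≤ b) :
    0 ≤ a * logb 2 ((a + b) / a) := by
  have hratio : 1 ≤ (a + b) / a := by rw [le_div_iff₀ ha]; linarith
  exact mul_nonneg ha.le (logb_nonneg one_lt_two hratio)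

lemma le_mul_logb_two_add_div_self {a b : ℝ} (hb : 0 < b) (hba : b ≤ a) :
    b ≤ b * logb 2 ((a + b) / b) := by
  have hratio : 2 ≤ (a + b) / b := by rw [le_div_iff₀ hb]; linarith
  have hlog : 1 ≤ logb 2 ((a + b) / b) := by
    simpa using logb_le_logb_of_le one_lt_two two_pos hratio
  nlinarith

lemma le_mul_logb_two_add_div_add_mul_logb_two_add_div {a b : ℝ} (hb : 0 < b) (hba : b ≤ a) :
    b ≤ a * logb 2 ((a + b) / a) + b * logb 2 ((a + b) / b) := by
  have := mul_logb_two_add_div_self_nonneg (hb.trans_le hba) hb.le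
  have := le_mul_logb_two_add_div_self hb hba
  linarith

theorem first_merge_potential (r r' : ℝ) (hr' : 0 < r') (hrr : r' ≤ r) :
    let pot : ℝ → ℝ := fun m => 3 / 2 * m * Real.logb 2 m
    r * Real.logb 2 ((r + r') / r) + r' * Real.logb 2 ((r + r') / r') ≥ r' ∧
    pot (r + r') - pot r - pot r' ≥ r' ∧
    r + r' ≤ (pot (r + r') - pot r - pot r') + r := by
  intro pot
  have hr : 0 < r := hr'.trans_le hrr
  have hgain := le_mul_logb_two_add_div_add_mul_logb_two_add_div hr' hrr
  have hsplit : pot (r + r') - pot r - pot r' =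
      3 / 2 * (r * logb 2 ((r + r') / r) + r' * logb 2 ((r + r') / r')) := by
    rw [← mul_logb_add_sub_mul_logb_sub_mul_logb hr.ne' hr'.ne' (by positivity)]
    ring
  refine ⟨hgain, ?_, ?_⟩ <;> linarith
end

section
/- Define f : [0,1] → ℝ by f(x) = (1+α)x for 0 ≤ x ≤ 1/2, f(x) = x + α(1-x) for 1/2 ≤ x ≤ θ, f(x) = αx for θ ≤ x ≤ 1, where α = 2+√7 and θ = α/(2α-1). Then for all x, y ∈ [0,1] with x(y+1) ≤ 1, we have x(1 + f(y)) ≤ min{f(1/2), f(x)}. -/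
/-!
The argument works for every slope `α ≥ 3`. The bound `2 (1 + f y) ≤ (1 + α)(1 + y)`, checked
piece by piece, gives `x (1 + f y) ≤ f(1/2) · x (y + 1) ≤ f(1/2)`, and also settles `x ≤ 1/2`,
where `f x = 2 f(1/2) x`. For `1/2 < x ≤ θ` the claim reads `x f(y) ≤ α (1 - x)`: if `y ≤ θ` then
`f y ≤ f(1/2)` and `x ≤ θ` suffices, otherwise it is `x (y + 1) ≤ 1`. For `θ < x` the constraint
forces `α y < α - 1`, and then `1 + f y ≤ α`.
-/

noncomputable def expansionThreshold (a : ℝ) : ℝ := a / (2 * a - 1)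

noncomputable def expansionFun (a x : ℝ) : ℝ :=
  if x ≤ 1 / 2 then (1 + a) * x
  else if x ≤ expansionThreshold a then x + a * (1 - x)
  else a * x

section

variable {a x y : ℝ}

lemma le_expansionThreshold_iff (ha : 1 < a) : x ≤ expansionThreshold a ↔ x * (2 * a - 1) ≤ a :=
  le_div_iff₀ (by linarith)

lemma expansionThreshold_lt_iff (ha : 1 < a) : expansionThreshold a < x ↔ a < x * (2 * a - 1) :=
  div_lt_iff₀ (by linarith)

lemma half_lt_expansionThreshold (ha : 1 < a) : 1 / 2 < expansionThreshold a := by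
  rw [expansionThreshold, lt_div_iff₀ (by linarith)]
  linarith

lemma expansionFun_of_le_half (h : x ≤ 1 / 2) : expansionFun a x = (1 + a) * x :=
  if_pos h

lemma expansionFun_of_half_lt_of_le (h₁ : 1 / 2 < x) (h₂ : x ≤ expansionThreshold a) :
    expansionFun a x = x + a * (1 - x) := by
  rw [expansionFun, if_neg h₁.not_ge, if_pos h₂]

lemma expansionFun_of_expansionThreshold_lt (ha : 1 < a) (h : expansionThreshold a < x) :
    expansionFun a x = a * x := by
  have h₁ : ¬x ≤ 1 / 2 := (lt_trans (half_lt_expansionThreshold ha) h).not_ge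
  rw [expansionFun, if_neg h₁, if_neg h.not_ge]

lemma expansionFun_half : expansionFun a (1 / 2) = (1 + a) / 2 := by
  rw [expansionFun_of_le_half le_rfl]
  ring

lemma expansionFun_le_of_le_expansionThreshold (ha : 1 ≤ a) (hy : y ≤ expansionThreshold a) :
    expansionFun a y ≤ (1 + a) / 2 := by
  unfold expansionFun
  split_ifs
  · nlinarith
  · nlinarith

lemma two_mul_one_add_expansionFun_le (ha : 3 ≤ a) (hy : y ≤ 1) :
    2 * (1 + expansionFun a y) ≤ (1 + a) * (1 + y) := by
  unfold expansionFun
  split_ifs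
  · nlinarith
  · nlinarith
  · nlinarith

lemma one_add_expansionFun_le (ha : 3 ≤ a) (hy : a * y ≤ a - 1) : 1 + expansionFun a y ≤ a := by
  unfold expansionFun
  split_ifs
  · nlinarith
  · nlinarith
  · linarith

lemma mul_one_add_expansionFun_le_mul (ha : 3 ≤ a) (hx : 0 ≤ x) (hy : y ≤ 1) :
    x * (1 + expansionFun a y) ≤ (1 + a) / 2 * (x * (y + 1)) := by
  nlinarith [two_mul_one_add_expansionFun_le ha hy]

lemma mul_one_add_expansionFun_le_of_le_half (ha : 3 ≤ a) (hx₀ : 0 ≤ x) (hx : x ≤ 1 / 2)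
    (hy : y ≤ 1) : x * (1 + expansionFun a y) ≤ expansionFun a x := by
  rw [expansionFun_of_le_half hx]
  calc x * (1 + expansionFun a y) ≤ (1 + a) / 2 * (x * (y + 1)) :=
        mul_one_add_expansionFun_le_mul ha hx₀ hy
    _ ≤ (1 + a) / 2 * (x * 2) := by gcongr; linarith
    _ = (1 + a) * x := by ring

lemma mul_one_add_expansionFun_le_of_half_lt_of_le (ha : 3 ≤ a) (hx₁ : 1 / 2 < x)
    (hx₂ : x ≤ expansionThreshold a) (hxy : x * (y + 1) ≤ 1) :
    x * (1 + expansionFun a y) ≤ expansionFun a x := by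
  rw [expansionFun_of_half_lt_of_le hx₁ hx₂]
  rcases le_or_gt y (expansionThreshold a) with hy | hy
  · have hfy := expansionFun_le_of_le_expansionThreshold (by linarith) hy
    have hxθ : x * (2 * a - 1) ≤ a := (le_expansionThreshold_iff (by linarith)).1 hx₂
    nlinarith
  · rw [expansionFun_of_expansionThreshold_lt (by linarith) hy]
    nlinarith

lemma mul_one_add_expansionFun_le_of_expansionThreshold_lt (ha : 3 ≤ a)
    (hx : expansionThreshold a < x) (hy : 0 ≤ y) (hxy : x * (y + 1) ≤ 1) :
    x * (1 + expansionFun a y) ≤ expansionFun a x := by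
  rw [expansionFun_of_expansionThreshold_lt (by linarith) hx]
  have hx' : a < x * (2 * a - 1) := (expansionThreshold_lt_iff (by linarith)).1 hx
  have hay : a * y ≤ a - 1 := by nlinarith
  have hx₀ : 0 ≤ x := by nlinarith
  nlinarith [one_add_expansionFun_le ha hay]

theorem mul_one_add_expansionFun_le_min (ha : 3 ≤ a) (hx : 0 ≤ x) (hy₀ : 0 ≤ y) (hy₁ : y ≤ 1)
    (hxy : x * (y + 1) ≤ 1) :
    x * (1 + expansionFun a y) ≤ min (expansionFun a (1 / 2)) (expansionFun a x) := by
  refine le_min ?_ ?_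
  · rw [expansionFun_half]
    nlinarith [mul_one_add_expansionFun_le_mul ha hx hy₁]
  · rcases le_or_gt x (1 / 2) with hx₁ | hx₁
    · exact mul_one_add_expansionFun_le_of_le_half ha hx hx₁ hy₁
    rcases le_or_gt x (expansionThreshold a) with hx₂ | hx₂
    · exact mul_one_add_expansionFun_le_of_half_lt_of_le ha hx₁ hx₂ hxy
    · exact mul_one_add_expansionFun_le_of_expansionThreshold_lt ha hx₂ hy₀ hxy

end

theorem expansion_function_key_inequality :
    let α : ℝ := 2 + Real.sqrt 7
    let θ : ℝ := α / (2 * α - 1)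
    let f : ℝ → ℝ := fun x =>
      if x ≤ 1 / 2 then (1 + α) * x
      else if x ≤ θ then x + α * (1 - x)
      else α * x
    ∀ x y : ℝ, 0 ≤ x → x ≤ 1 → 0 ≤ y → y ≤ 1 → x * (y + 1) ≤ 1 →
      x * (1 + f y) ≤ min (f (1 / 2)) (f x) := by
  intro α θ f x y hx _ hy₀ hy₁ hxy
  have hα : 3 ≤ α := by
    have : 1 ≤ Real.sqrt 7 := Real.one_le_sqrt.2 (by norm_num)
    linarith
  exact mul_one_add_expansionFun_le_min hα hx hy₀ hy₁ hxy
end
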